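/- For the scalar Gaussian source X ~ N(0,1), the asymptotic distortion-rate-perception function with rate R ≥ 0, common randomness rate C ≥ 0, and perception level P ≥ 0 satisfies D(R,C,P) = 2^{−2R} + [max(√(2 − 2^{−2R} − 2√((1 − 2^{−2R})(1 − 2^{−2(R+C)}))) − √P, 0)]²; in particular the expression under the outer square root is nonnegative, and D(R,C,P) is nonincreasing in each of R, C, and P. -/

import Mathlib

/-!
Write `a = 2^{-2R}` and `t = 2^{-2C}`, so that `2^{-2(R+C)} = t a` with `a, t ∈ [0, 1]`.
The expression under the outer square root is `g(a, b) = 2 - a - 2√((1-a)(1-b))` (`drcpGap`)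
at `b = t a`, and `g(a, b) = (√(1-a) - √(1-b))² + b ≥ 0`. The distortion
`a + (max (√g - √P) 0)²` grows with `a` and `g` and shrinks with `P`. Raising `C` lowers `b`
and hence `g`. Raising `R` lowers `a`, and `a ↦ g(a, t a) = 2 - (a + 2x)`, where
`x = √((1-a)(1-ta))`, is monotone on `[0, 1]`: the slope of `a + 2x` is
`1 - ((1-ta) + t(1-a))/x ≤ 1 - (1-ta)/x ≤ 0`, because `x ≤ 1 - ta`.
-/

open Real

/-- The closed-form scalar Gaussian distortion-rate-perception function
`D(R,C,P) = 2^{−2R} + (max(√(2 − 2^{−2R} − 2√((1 − 2^{−2R})(1 − 2^{−2(R+C)}))) − √P, 0))²`. -/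
noncomputable def DRCP (R C P : ℝ) : ℝ :=
  (2 : ℝ) ^ (-2 * R) +
    (max (Real.sqrt (2 - (2 : ℝ) ^ (-2 * R) -
        2 * Real.sqrt ((1 - (2 : ℝ) ^ (-2 * R)) * (1 - (2 : ℝ) ^ (-2 * (R + C))))) -
      Real.sqrt P) 0) ^ 2

noncomputable def drcpGap (a b : ℝ) : ℝ := 2 - a - 2 * √((1 - a) * (1 - b))

lemma drcpGap_eq_sq_add {a b : ℝ} (ha : a ≤ 1) (hb : b ≤ 1) :
    drcpGap a b = (√(1 - a) - √(1 - b)) ^ 2 + b := by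
  rw [drcpGap, sqrt_mul (by linarith), sub_sq, sq_sqrt (by linarith), sq_sqrt (by linarith)]
  ring

lemma drcpGap_nonneg {a b : ℝ} (ha : a ≤ 1) (hb0 : 0 ≤ b) (hb1 : b ≤ 1) : 0 ≤ drcpGap a b := by
  rw [drcpGap_eq_sq_add ha hb1]
  positivity

lemma drcpGap_mono_right {a b b' : ℝ} (ha : a ≤ 1) (hb : b' ≤ b) : drcpGap a b' ≤ drcpGap a b := by
  have : (1 - a) * (1 - b) ≤ (1 - a) * (1 - b') :=
    mul_le_mul_of_nonneg_left (by linarith) (by linarith)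
  simp only [drcpGap]
  linarith [sqrt_le_sqrt this]

lemma drcpGap_mul_monotoneOn {t : ℝ} (ht0 : 0 ≤ t) (ht1 : t ≤ 1) :
    MonotoneOn (fun a => drcpGap a (t * a)) (Set.Icc 0 1) := by
  rintro a' ⟨ha'0, ha'1⟩ a ⟨ha0, ha1⟩ haa
  rcases haa.eq_or_lt with rfl | hlt
  · exact le_rfl
  set x := √((1 - a) * (1 - t * a))
  set y := √((1 - a') * (1 - t * a'))
  suffices a - a' ≤ 2 * (y - x) by simp only [drcpGap]; linarith
  have hta : t * a ≤ a := mul_le_of_le_one_left ha0 ht1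
  have hta' : t * a' ≤ a' := mul_le_of_le_one_left ha'0 ht1
  have hx0 : 0 ≤ x := sqrt_nonneg _
  have hx2 : x ^ 2 = (1 - a) * (1 - t * a) := sq_sqrt (by nlinarith)
  have hy2 : y ^ 2 = (1 - a') * (1 - t * a') := sq_sqrt (by nlinarith)
  have hxy : x ≤ y :=
    sqrt_le_sqrt (mul_le_mul (by linarith) (by nlinarith) (by nlinarith) (by linarith))
  -- `√(uv) ≤ v` when `0 ≤ u ≤ v`
  have hx : x ≤ 1 - t * a := (sqrt_le_left (by linarith)).2 (by nlinarith)
  have hy : y ≤ 1 - t * a' := (sqrt_le_left (by linarith)).2 (by nlinarith)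
  set K := (1 - t * a) + t * (1 - a')
  have hK : 0 < K := by nlinarith
  have hdiff : (y - x) * (y + x) = (a - a') * K := by linear_combination hy2 - hx2
  have hprod : 0 ≤ (2 * (y - x) - (a - a')) * K := by
    have : 0 ≤ (y - x) * (2 * K - (x + y)) := mul_nonneg (by linarith) (by nlinarith)
    linear_combination this - hdiff
  linarith [nonneg_of_mul_nonneg_left hprod hK]

lemma sq_max_sqrt_sub_sqrt_le {f f' p p' : ℝ} (hf : f' ≤ f) (hp : p ≤ p') :
    max (√f' - √p') 0 ^ 2 ≤ max (√f - √p) 0 ^ 2 := by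
  gcongr

lemma DRCP_le_DRCP {R C P R' C' P' : ℝ} (hR : (2 : ℝ) ^ (-2 * R') ≤ (2 : ℝ) ^ (-2 * R))
    (hgap : drcpGap ((2 : ℝ) ^ (-2 * R')) ((2 : ℝ) ^ (-2 * (R' + C'))) ≤
      drcpGap ((2 : ℝ) ^ (-2 * R)) ((2 : ℝ) ^ (-2 * (R + C))))
    (hP : P ≤ P') : DRCP R' C' P' ≤ DRCP R C P :=
  add_le_add hR (sq_max_sqrt_sub_sqrt_le hgap hP)

lemma two_rpow_neg_two_mul_mem_Icc {x : ℝ} (hx : 0 ≤ x) : (2 : ℝ) ^ (-2 * x) ∈ Set.Icc 0 1 :=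
  ⟨by positivity, rpow_le_one_of_one_le_of_nonpos one_le_two (by linarith)⟩

lemma two_rpow_neg_two_mul_le {x y : ℝ} (h : x ≤ y) : (2 : ℝ) ^ (-2 * y) ≤ (2 : ℝ) ^ (-2 * x) :=
  rpow_le_rpow_of_exponent_le one_le_two (by linarith)

lemma two_rpow_neg_two_mul_add (R C : ℝ) :
    (2 : ℝ) ^ (-2 * (R + C)) = (2 : ℝ) ^ (-2 * C) * (2 : ℝ) ^ (-2 * R) := by
  rw [← rpow_add two_pos]
  ring_nf

theorem stmt16_general (R C P : ℝ) (hR : 0 ≤ R) (hC : 0 ≤ C) :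
    0 ≤ 2 - (2 : ℝ) ^ (-2 * R) -
        2 * Real.sqrt ((1 - (2 : ℝ) ^ (-2 * R)) * (1 - (2 : ℝ) ^ (-2 * (R + C)))) ∧
    (∀ R', R ≤ R' → DRCP R' C P ≤ DRCP R C P) ∧
    (∀ C', C ≤ C' → DRCP R C' P ≤ DRCP R C P) ∧
    (∀ P', P ≤ P' → DRCP R C P' ≤ DRCP R C P) := by
  have ha := two_rpow_neg_two_mul_mem_Icc hR
  have ht := two_rpow_neg_two_mul_mem_Icc hC
  have hb := two_rpow_neg_two_mul_mem_Icc (add_nonneg hR hC)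
  refine ⟨drcpGap_nonneg ha.2 hb.1 hb.2, ?_, ?_, ?_⟩
  · intro R' hRR'
    have ha' := two_rpow_neg_two_mul_mem_Icc (hR.trans hRR')
    refine DRCP_le_DRCP (two_rpow_neg_two_mul_le hRR') ?_ le_rfl
    rw [two_rpow_neg_two_mul_add R, two_rpow_neg_two_mul_add R']
    exact drcpGap_mul_monotoneOn ht.1 ht.2 ha' ha (two_rpow_neg_two_mul_le hRR')
  · intro C' hCC'
    have hb' := two_rpow_neg_two_mul_le (by linarith : R + C ≤ R + C')
    exact DRCP_le_DRCP le_rfl (drcpGap_mono_right ha.2 hb') le_rfl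
  · intro P' hPP'
    exact DRCP_le_DRCP le_rfl le_rfl hPP'

/-- For the scalar Gaussian source `N(0,1)` with rate `R ≥ 0`, common randomness rate `C ≥ 0`,
and perception level `P ≥ 0`: the expression under the outer square root in the closed-form
distortion-rate-perception function is nonnegative, and `D(R,C,P)` is nonincreasing in each of
`R`, `C`, and `P`. -/
theorem stmt16 (R C P : ℝ) (hR : 0 ≤ R) (hC : 0 ≤ C) (hP : 0 ≤ P) :
    0 ≤ 2 - (2 : ℝ) ^ (-2 * R) -
        2 * Real.sqrt ((1 - (2 : ℝ) ^ (-2 * R)) * (1 - (2 : ℝ) ^ (-2 * (R + C)))) ∧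
    (∀ R', R ≤ R' → DRCP R' C P ≤ DRCP R C P) ∧
    (∀ C', C ≤ C' → DRCP R C' P ≤ DRCP R C P) ∧
    (∀ P', P ≤ P' → DRCP R C P' ≤ DRCP R C P) :=
  stmt16_general R C P hR hC
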